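/- arXiv:2112.11808 — 3 statements merged into one kernel-verified Lean document; each statement's English description precedes it below -/
import Mathlib

section
/- Let $(\Omega,\mathscr{F},P)$ be a probability space with a sub-$\sigma$-field $\mathscr{F}_s \subset \tilde{\mathscr{F}}_s \subset \mathscr{F}$ and let $\rho$ be a random variable such that the event $\{\rho > s\}$ satisfies: for every $\tilde{A} \in \tilde{\mathscr{F}}_s$ there exists $A \in \mathscr{F}_s$ with $\{\rho > s\} \cap A = \{\rho > s\} \cap \tilde{A}$. Then for any $[0,\infty]$-valued random variable $X$ and any $t \geq s$: $E[X \mathbf{1}_{\{\rho > t\}} \mid \tilde{\mathscr{F}}_s] \cdot P(\rho > s \mid \mathscr{F}_s) = E[X \mathbf{1}_{\{\rho > t\}} \mid \mathscr{F}_s] \cdot P(\rho > s \mid \tilde{\mathscr{F}}_s)$ almost surely. -/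
open MeasureTheory Set
open scoped ENNReal

/-!
Write `S = {ρ > s}` and `Y = X 1_{ρ > t}`; since `s ≤ t`, `Y` vanishes off `S`. Pulling out
known factors, `E₁ P₁` is a version of `E[Y P₁ | 𝓕̃ₛ]` and `E₂ P₂` one of `E[E₂ 1_S | 𝓕̃ₛ]`.
The functions `Y P₁` and `E₂ 1_S` have the same integral over every `𝓕ₛ`-set (both equal
`∫ E₂ P₁` there), and as both vanish off `S`, the compatibility hypothesis transfers this to
every `𝓕̃ₛ`-set. Hence the two products are versions of the same conditional expectation.
-/

/-- `g` is a version of the conditional expectation of the `[0,∞]`-valued random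
variable `f` given the sub-σ-field `m'`: it is `m'`-measurable and has the same
integral as `f` over every `m'`-measurable set. -/
def IsLCondExp {Ω : Type*} {mΩ : MeasurableSpace Ω} (μ : Measure Ω)
    (m' : MeasurableSpace Ω) (f g : Ω → ℝ≥0∞) : Prop :=
  Measurable[m'] g ∧ ∀ A : Set Ω, MeasurableSet[m'] A →
    ∫⁻ ω in A, f ω ∂μ = ∫⁻ ω in A, g ω ∂μ

namespace IsLCondExp

variable {Ω : Type*} {m' mΩ : MeasurableSpace Ω} {μ : Measure Ω} {f g h : Ω → ℝ≥0∞}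

theorem restrict (hm : m' ≤ mΩ) (hg : IsLCondExp μ m' f g) {A : Set Ω}
    (hA : MeasurableSet[m'] A) : IsLCondExp (μ.restrict A) m' f g := by
  refine ⟨hg.1, fun B hB => ?_⟩
  rw [Measure.restrict_restrict (hm B hB)]
  exact hg.2 _ (hB.inter hA)

/-- Both sides are integrals of `h` against measures that agree on `m'`. -/
theorem lintegral_mul_left (hm : m' ≤ mΩ) (hf : Measurable f) (hg : IsLCondExp μ m' f g)
    (hh : Measurable[m'] h) : ∫⁻ ω, h ω * f ω ∂μ = ∫⁻ ω, h ω * g ω ∂μ := by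
  have htrim : (μ.withDensity f).trim hm = (μ.withDensity g).trim hm := by
    refine @Measure.ext _ m' _ _ fun A hA => ?_
    rw [trim_measurableSet_eq hm hA, trim_measurableSet_eq hm hA,
      withDensity_apply _ (hm A hA), withDensity_apply _ (hm A hA), hg.2 A hA]
  have hh' : Measurable h := hh.mono hm le_rfl
  calc ∫⁻ ω, h ω * f ω ∂μ = ∫⁻ ω, h ω ∂(μ.withDensity f).trim hm := by
        rw [lintegral_trim hm hh, lintegral_withDensity_eq_lintegral_mul _ hf hh']
        simp only [Pi.mul_apply, mul_comm]
    _ = ∫⁻ ω, h ω * g ω ∂μ := by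
        rw [htrim, lintegral_trim hm hh,
          lintegral_withDensity_eq_lintegral_mul _ (hg.1.mono hm le_rfl) hh']
        simp only [Pi.mul_apply, mul_comm]

theorem mul_left (hm : m' ≤ mΩ) (hf : Measurable f) (hg : IsLCondExp μ m' f g)
    (hh : Measurable[m'] h) : IsLCondExp μ m' (fun ω => h ω * f ω) (fun ω => h ω * g ω) :=
  ⟨hh.mul hg.1, fun _ hA => (hg.restrict hm hA).lintegral_mul_left hm hf hh⟩

theorem mul_right (hm : m' ≤ mΩ) (hf : Measurable f) (hg : IsLCondExp μ m' f g)
    (hh : Measurable[m'] h) : IsLCondExp μ m' (fun ω => f ω * h ω) (fun ω => g ω * h ω) := by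
  simpa only [mul_comm] using hg.mul_left hm hf hh

theorem ae_eq [IsFiniteMeasure μ] (hm : m' ≤ mΩ) {g₁ g₂ : Ω → ℝ≥0∞}
    (h₁ : IsLCondExp μ m' f g₁) (h₂ : IsLCondExp μ m' f g₂) : g₁ =ᵐ[μ] g₂ := by
  refine ae_eq_of_ae_eq_trim (hm := hm) ?_
  refine ae_eq_of_forall_setLIntegral_eq_of_sigmaFinite h₁.1 h₂.1 fun A hA _ => ?_
  rw [restrict_trim hm μ hA, lintegral_trim hm h₁.1, lintegral_trim hm h₂.1, ← h₁.2 A hA,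
    h₂.2 A hA]

end IsLCondExp

section

variable {Ω : Type*} {m m' mΩ : MeasurableSpace Ω} {μ : Measure Ω} {f g : Ω → ℝ≥0∞} {S : Set Ω}

theorem setLIntegral_eq_of_inter_eq (hS : MeasurableSet S) (hf : Function.support f ⊆ S)
    {A A' : Set Ω} (hAA' : S ∩ A = S ∩ A') : ∫⁻ ω in A, f ω ∂μ = ∫⁻ ω in A', f ω ∂μ := by
  rw [← indicator_eq_self.2 hf, setLIntegral_indicator hS, setLIntegral_indicator hS, hAA']

theorem setLIntegral_eq_of_forall_inter_eq (hS : MeasurableSet S)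
    (hcompat : ∀ A' : Set Ω, MeasurableSet[m'] A' →
      ∃ A : Set Ω, MeasurableSet[m] A ∧ S ∩ A = S ∩ A')
    (hf : Function.support f ⊆ S) (hg : Function.support g ⊆ S)
    (hfg : ∀ A : Set Ω, MeasurableSet[m] A → ∫⁻ ω in A, f ω ∂μ = ∫⁻ ω in A, g ω ∂μ)
    {A' : Set Ω} (hA' : MeasurableSet[m'] A') : ∫⁻ ω in A', f ω ∂μ = ∫⁻ ω in A', g ω ∂μ := by
  obtain ⟨A, hA, hAA'⟩ := hcompat A' hA'
  rw [← setLIntegral_eq_of_inter_eq hS hf hAA', ← setLIntegral_eq_of_inter_eq hS hg hAA',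
    hfg A hA]

end

/-- Lemma on the essential identity for conditional expectations:
if every `𝓕̃ₛ`-measurable set agrees with an `𝓕ₛ`-measurable set on `{ρ > s}`, then
`E[X 1_{ρ>t} | 𝓕̃ₛ] ⬝ P(ρ > s | 𝓕ₛ) = E[X 1_{ρ>t} | 𝓕ₛ] ⬝ P(ρ > s | 𝓕̃ₛ)` a.s. for `s ≤ t`. -/
theorem stmt0 {Ω : Type*} [mΩ : MeasurableSpace Ω] (μ : Measure Ω)
    [IsProbabilityMeasure μ]
    (Fs Fs' : MeasurableSpace Ω) (hsub : Fs ≤ Fs') (hsub' : Fs' ≤ mΩ)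
    (ρ : Ω → ℝ≥0∞) (hρ : Measurable[mΩ] ρ)
    (s t : ℝ≥0∞) (hst : s ≤ t)
    (hcompat : ∀ A' : Set Ω, MeasurableSet[Fs'] A' →
      ∃ A : Set Ω, MeasurableSet[Fs] A ∧
        {ω | s < ρ ω} ∩ A = {ω | s < ρ ω} ∩ A')
    (X : Ω → ℝ≥0∞) (hX : Measurable[mΩ] X)
    (E₁ P₁ E₂ P₂ : Ω → ℝ≥0∞)
    (hE₁ : IsLCondExp μ Fs' (fun ω => X ω * ({ω' | t < ρ ω'}).indicator 1 ω) E₁)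
    (hP₁ : IsLCondExp μ Fs (({ω' | s < ρ ω'}).indicator 1) P₁)
    (hE₂ : IsLCondExp μ Fs (fun ω => X ω * ({ω' | t < ρ ω'}).indicator 1 ω) E₂)
    (hP₂ : IsLCondExp μ Fs' (({ω' | s < ρ ω'}).indicator 1) P₂) :
    ∀ᵐ ω ∂μ, E₁ ω * P₁ ω = E₂ ω * P₂ ω := by
  set S : Set Ω := {ω | s < ρ ω}
  set Y : Ω → ℝ≥0∞ := fun ω => X ω * ({ω' | t < ρ ω'}).indicator 1 ω
  have hFs : Fs ≤ mΩ := hsub.trans hsub'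
  have h1 : Measurable[mΩ] (1 : Ω → ℝ≥0∞) := measurable_const
  have hS : MeasurableSet[mΩ] S := measurableSet_lt measurable_const hρ
  have hY : Measurable[mΩ] Y := hX.mul (h1.indicator (measurableSet_lt measurable_const hρ))
  have h1S : Measurable[mΩ] (S.indicator (1 : Ω → ℝ≥0∞)) := h1.indicator hS
  have hYS : Function.support (fun ω => Y ω * P₁ ω) ⊆ S := fun ω hω => by
    by_contra hωS
    have htω : ¬t < ρ ω := fun htω => hωS (hst.trans_lt htω)
    simp [Y, htω] at hω
  have h1SS : Function.support (fun ω => E₂ ω * S.indicator 1 ω) ⊆ S := fun ω hω => by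
    by_contra hωS
    simp [hωS] at hω
  have hFsIntegrals : ∀ A, MeasurableSet[Fs] A →
      ∫⁻ ω in A, Y ω * P₁ ω ∂μ = ∫⁻ ω in A, E₂ ω * S.indicator 1 ω ∂μ := fun A hA => by
    rw [(hE₂.mul_right hFs hY hP₁.1).2 A hA, (hP₁.mul_left hFs h1S hE₂.1).2 A hA]
  have h₁ : IsLCondExp μ Fs' (fun ω => Y ω * P₁ ω) (fun ω => E₁ ω * P₁ ω) :=
    hE₁.mul_right hsub' hY (hP₁.1.mono hsub le_rfl)
  have h₂ : IsLCondExp μ Fs' (fun ω => Y ω * P₁ ω) (fun ω => E₂ ω * P₂ ω) := by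
    have hP₂' := hP₂.mul_left hsub' h1S (hE₂.1.mono hsub le_rfl)
    refine ⟨hP₂'.1, fun A' hA' => ?_⟩
    rw [setLIntegral_eq_of_forall_inter_eq hS hcompat hYS h1SS hFsIntegrals hA', hP₂'.2 A' hA']
  exact h₁.ae_eq hsub' h₂
end

section
/- There exists a function $\varphi \in C^1((0,\infty))$ with: (i) $\lim_{x\downarrow 0}\varphi(x) = -\infty$, $\varphi' > 0$ everywhere, $\varphi$ twice continuously differentiable on $(0,\varepsilon]$ and on $[\varepsilon,\infty)$ with $\varphi''(x) > 0$ for $x > \varepsilon$; and (ii) for a.e. $t \in [0,T]$ and all $x > 0$ with $x \neq \varepsilon$: $\tfrac{1}{2}\eta(t,x)^2\varphi''(x) + \zeta(t,x)\varphi'(x) \geq -c_0(t)\varphi_0(x)$ whenever $x < \varepsilon$, and $\geq -c_\zeta(t)\varphi_\zeta(x)\varphi'(x)$ whenever $x > \varepsilon$. Explicitly one may take $\varphi(x) = \log x$ for $x < \varepsilon$ and $\varphi(x) = \log\varepsilon + \int_\varepsilon^x \hat{\varphi}(y)\,dy$ for $x \geq \varepsilon$, where $\hat{\varphi}(x) =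 \tfrac{1}{\varepsilon}\exp(\int_\varepsilon^x \varphi_\zeta(y)^{-1}\,dy)$. -/
/-!
Below `ε` take `φ = log`: then `½η²φ'' + ζφ' = ζ/x - η²/(2x²)`, so the first inequality is the
hypothesis on `(0, ε)` rearranged. Above `ε` take `φ' = φ̂`, the solution of `φ̂' = φ̂ / φ_ζ`
with `φ̂(ε) = 1/ε`; it is positive, so `φ'' > 0`, and the bound `ζ ≥ -c_ζ φ_ζ` multiplied by
`φ' > 0` gives the second inequality. Both pieces have value `log ε` and slope `1/ε` at `ε`,
so `φ` is `C¹`.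
-/

open MeasureTheory Set Function Filter
open scoped Topology

theorem contDiffOn_succ_of_hasDerivWithinAt {𝕜 F : Type*} [NontriviallyNormedField 𝕜]
    [NormedAddCommGroup F] [NormedSpace 𝕜 F] {f f' : 𝕜 → F} {s : Set 𝕜} {n : ℕ}
    (hs : UniqueDiffOn 𝕜 s) (hf : ∀ x ∈ s, HasDerivWithinAt f (f' x) s x)
    (hf' : ContDiffOn 𝕜 n f' s) : ContDiffOn 𝕜 (n + 1) f s := by
  rw [contDiffOn_succ_iff_derivWithin hs]
  refine ⟨fun x hx => (hf x hx).differentiableWithinAt, by simp, ?_⟩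
  exact hf'.congr fun x hx => (hf x hx).derivWithin (hs x hx)

theorem ContinuousOn.hasDerivWithinAt_intervalIntegral_Ici {E : Type*} [NormedAddCommGroup E]
    [NormedSpace ℝ E] [CompleteSpace E] {f : ℝ → E} {a x : ℝ} (hf : ContinuousOn f (Ici a))
    (hx : a ≤ x) : HasDerivWithinAt (fun u => ∫ t in a..u, f t) (f x) (Ici a) x := by
  have hint : IntervalIntegrable f volume a x :=
    (hf.mono (uIcc_of_le hx ▸ Icc_subset_Ici_self)).intervalIntegrable
  have hf' : ContinuousOn f (Ioi a) := hf.mono Ioi_subset_Ici_self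
  rcases hx.eq_or_lt with rfl | hlt
  · exact intervalIntegral.integral_hasDerivWithinAt_right hint
      (hf'.stronglyMeasurableAtFilter_nhdsWithin measurableSet_Ioi a)
      ((hf a self_mem_Ici).mono Ioi_subset_Ici_self)
  · exact (intervalIntegral.integral_hasDerivAt_right hint
      (hf'.stronglyMeasurableAtFilter isOpen_Ioi x hlt)
      (hf.continuousAt (Ici_mem_nhds hlt))).hasDerivWithinAt

noncomputable def lyapunovSlope (ε : ℝ) (φζ : ℝ → ℝ) (y : ℝ) : ℝ :=
  (1 / ε) * Real.exp (∫ z in ε..y, (φζ z)⁻¹)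

noncomputable def lyapunovOuter (ε : ℝ) (φζ : ℝ → ℝ) (x : ℝ) : ℝ :=
  Real.log ε + ∫ y in ε..x, lyapunovSlope ε φζ y

noncomputable def lyapunov (ε : ℝ) (φζ : ℝ → ℝ) (x : ℝ) : ℝ :=
  if x < ε then Real.log x else lyapunovOuter ε φζ x

noncomputable def lyapunovDeriv (ε : ℝ) (φζ : ℝ → ℝ) (x : ℝ) : ℝ :=
  if x < ε then x⁻¹ else lyapunovSlope ε φζ x

section Lyapunov

variable {ε x : ℝ} {φζ : ℝ → ℝ}

theorem lyapunovSlope_pos (hε : 0 < ε) : 0 < lyapunovSlope ε φζ x := by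
  unfold lyapunovSlope; positivity

theorem lyapunovSlope_self : lyapunovSlope ε φζ ε = ε⁻¹ := by
  simp [lyapunovSlope]

theorem lyapunov_of_le (hx : x ≤ ε) : lyapunov ε φζ x = Real.log x := by
  rcases hx.lt_or_eq with h | rfl
  · simp [lyapunov, h]
  · simp [lyapunov, lyapunovOuter]

theorem lyapunov_of_ge (hx : ε ≤ x) : lyapunov ε φζ x = lyapunovOuter ε φζ x :=
  if_neg hx.not_gt

theorem lyapunovDeriv_of_ge (hx : ε ≤ x) : lyapunovDeriv ε φζ x = lyapunovSlope ε φζ x :=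
  if_neg hx.not_gt

theorem lyapunovDeriv_of_le (hx : x ≤ ε) : lyapunovDeriv ε φζ x = x⁻¹ := by
  rcases hx.lt_or_eq with h | rfl
  · exact if_pos h
  · exact (lyapunovDeriv_of_ge le_rfl).trans lyapunovSlope_self

theorem lyapunovDeriv_pos (hε : 0 < ε) (hx : 0 < x) : 0 < lyapunovDeriv ε φζ x := by
  rcases lt_or_ge x ε with h | h
  · rw [lyapunovDeriv_of_le h.le]; exact inv_pos.2 hx
  · rw [lyapunovDeriv_of_ge h]; exact lyapunovSlope_pos hε

theorem lyapunov_eventuallyEq_log (hx : x < ε) : lyapunov ε φζ =ᶠ[𝓝 x] Real.log :=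
  eventually_of_mem (Iio_mem_nhds hx) fun _ hy => lyapunov_of_le (le_of_lt hy)

theorem lyapunov_eventuallyEq_outer (hx : ε < x) : lyapunov ε φζ =ᶠ[𝓝 x] lyapunovOuter ε φζ :=
  eventually_of_mem (Ioi_mem_nhds hx) fun _ hy => lyapunov_of_ge (le_of_lt hy)

theorem tendsto_lyapunov_atBot (hε : 0 < ε) : Tendsto (lyapunov ε φζ) (𝓝[>] 0) atBot :=
  Real.tendsto_log_nhdsGT_zero.congr'
    ((lyapunov_eventuallyEq_log hε).filter_mono nhdsWithin_le_nhds).symm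

theorem contDiffOn_lyapunov_Ioc : ContDiffOn ℝ 2 (lyapunov ε φζ) (Ioc 0 ε) :=
  (Real.contDiffOn_log.mono fun _ hx => ne_of_gt hx.1).congr fun _ hx => lyapunov_of_le hx.2

theorem deriv_lyapunov_of_lt (hx : x < ε) : deriv (lyapunov ε φζ) x = x⁻¹ := by
  rw [(lyapunov_eventuallyEq_log hx).deriv_eq, Real.deriv_log']

theorem deriv_deriv_lyapunov_of_lt (hx : x < ε) :
    deriv (deriv (lyapunov ε φζ)) x = -(x ^ 2)⁻¹ := by
  rw [(lyapunov_eventuallyEq_log hx).deriv.deriv_eq, Real.deriv_log', deriv_inv]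

theorem lyapunov_generator_ge_of_lt {e z c p : ℝ} (hx0 : 0 < x) (hx : x < ε)
    (h : e ^ 2 / (2 * x ^ 2) ≤ z / x + c * p) :
    -(c * p) ≤
      1 / 2 * e ^ 2 * deriv (deriv (lyapunov ε φζ)) x + z * deriv (lyapunov ε φζ) x := by
  have hlog : 1 / 2 * e ^ 2 * -(x ^ 2)⁻¹ + z * x⁻¹ = z / x - e ^ 2 / (2 * x ^ 2) := by
    field_simp
    ring
  rw [deriv_deriv_lyapunov_of_lt hx, deriv_lyapunov_of_lt hx, hlog]
  linarith

variable (hφζcont : ContinuousOn φζ (Ici ε)) (hφζpos : ∀ v ∈ Ici ε, 0 < φζ v)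
include hφζcont hφζpos

theorem hasDerivWithinAt_lyapunovSlope (hx : ε ≤ x) :
    HasDerivWithinAt (lyapunovSlope ε φζ) ((φζ x)⁻¹ * lyapunovSlope ε φζ x) (Ici ε) x := by
  have hinv : ContinuousOn (fun z => (φζ z)⁻¹) (Ici ε) :=
    hφζcont.inv₀ fun v hv => (hφζpos v hv).ne'
  refine (((hinv.hasDerivWithinAt_intervalIntegral_Ici hx).exp).const_mul (1 / ε)).congr_deriv ?_
  unfold lyapunovSlope; ring

theorem continuousOn_lyapunovSlope : ContinuousOn (lyapunovSlope ε φζ) (Ici ε) :=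
  fun _ hx => (hasDerivWithinAt_lyapunovSlope hφζcont hφζpos hx).continuousWithinAt

theorem hasDerivWithinAt_lyapunovOuter (hx : ε ≤ x) :
    HasDerivWithinAt (lyapunovOuter ε φζ) (lyapunovSlope ε φζ x) (Ici ε) x :=
  ((continuousOn_lyapunovSlope hφζcont hφζpos).hasDerivWithinAt_intervalIntegral_Ici hx).const_add _

theorem contDiffOn_lyapunovOuter : ContDiffOn ℝ 2 (lyapunovOuter ε φζ) (Ici ε) := by
  have hslope : ContDiffOn ℝ 1 (lyapunovSlope ε φζ) (Ici ε) :=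
    contDiffOn_succ_of_hasDerivWithinAt (n := 0) (uniqueDiffOn_Ici ε)
      (fun _ hx => hasDerivWithinAt_lyapunovSlope hφζcont hφζpos hx)
      (contDiffOn_zero.2 ((hφζcont.inv₀ fun v hv => (hφζpos v hv).ne').mul
        (continuousOn_lyapunovSlope hφζcont hφζpos)))
  exact contDiffOn_succ_of_hasDerivWithinAt (n := 1) (uniqueDiffOn_Ici ε)
    (fun _ hx => hasDerivWithinAt_lyapunovOuter hφζcont hφζpos hx) hslope

theorem hasDerivAt_lyapunov (hx : 0 < x) :
    HasDerivAt (lyapunov ε φζ) (lyapunovDeriv ε φζ x) x := by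
  rcases lt_trichotomy x ε with hlt | rfl | hgt
  · rw [lyapunovDeriv_of_le hlt.le]
    exact (Real.hasDerivAt_log hx.ne').congr_of_eventuallyEq (lyapunov_eventuallyEq_log hlt)
  · rw [lyapunovDeriv_of_le le_rfl]
    have hleft : HasDerivWithinAt (lyapunov x φζ) x⁻¹ (Iic x) x :=
      (Real.hasDerivAt_log hx.ne').hasDerivWithinAt.congr (fun _ hy => lyapunov_of_le hy)
        (lyapunov_of_le le_rfl)
    have hright : HasDerivWithinAt (lyapunov x φζ) x⁻¹ (Ici x) x := by
      rw [← lyapunovSlope_self (φζ := φζ)]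
      exact (hasDerivWithinAt_lyapunovOuter hφζcont hφζpos le_rfl).congr
        (fun _ hy => lyapunov_of_ge hy) (lyapunov_of_ge le_rfl)
    simpa only [Iic_union_Ici, hasDerivWithinAt_univ] using hleft.union hright
  · rw [lyapunovDeriv_of_ge hgt.le]
    exact ((hasDerivWithinAt_lyapunovOuter hφζcont hφζpos hgt.le).hasDerivAt
      (Ici_mem_nhds hgt)).congr_of_eventuallyEq (lyapunov_eventuallyEq_outer hgt)

theorem continuousAt_lyapunovDeriv (hx : 0 < x) : ContinuousAt (lyapunovDeriv ε φζ) x := by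
  rcases lt_trichotomy x ε with hlt | rfl | hgt
  · exact (continuousAt_inv₀ hx.ne').congr
      (eventually_of_mem (Iio_mem_nhds hlt) fun _ hy => (lyapunovDeriv_of_le (le_of_lt hy)).symm)
  · rw [continuousAt_iff_continuous_left_right]
    exact ⟨(continuousAt_inv₀ hx.ne').continuousWithinAt.congr
        (fun _ hy => lyapunovDeriv_of_le hy) (lyapunovDeriv_of_le le_rfl),
      (continuousOn_lyapunovSlope hφζcont hφζpos x self_mem_Ici).congr
        (fun _ hy => lyapunovDeriv_of_ge hy) (lyapunovDeriv_of_ge le_rfl)⟩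
  · exact ((continuousOn_lyapunovSlope hφζcont hφζpos).continuousAt (Ici_mem_nhds hgt)).congr
      (eventually_of_mem (Ioi_mem_nhds hgt) fun _ hy => (lyapunovDeriv_of_ge (le_of_lt hy)).symm)

theorem contDiffOn_lyapunov_Ioi : ContDiffOn ℝ 1 (lyapunov ε φζ) (Ioi 0) :=
  contDiffOn_succ_of_hasDerivWithinAt (n := 0) (uniqueDiffOn_Ioi 0)
    (fun _ hx => (hasDerivAt_lyapunov hφζcont hφζpos hx).hasDerivWithinAt)
    (contDiffOn_zero.2 fun _ hx =>
      (continuousAt_lyapunovDeriv hφζcont hφζpos hx).continuousWithinAt)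

theorem contDiffOn_lyapunov_Ici : ContDiffOn ℝ 2 (lyapunov ε φζ) (Ici ε) :=
  (contDiffOn_lyapunovOuter hφζcont hφζpos).congr fun _ hx => lyapunov_of_ge hx

theorem deriv_lyapunov_pos (hε : 0 < ε) (hx : 0 < x) : 0 < deriv (lyapunov ε φζ) x :=
  (hasDerivAt_lyapunov hφζcont hφζpos hx).deriv ▸ lyapunovDeriv_pos hε hx

theorem deriv_lyapunov_eventuallyEq_slope (hx : ε < x) :
    deriv (lyapunov ε φζ) =ᶠ[𝓝 x] lyapunovSlope ε φζ :=
  (lyapunov_eventuallyEq_outer hx).deriv.trans <| eventually_of_mem (Ioi_mem_nhds hx)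
    fun _ hy => ((hasDerivWithinAt_lyapunovOuter hφζcont hφζpos hy.out.le).hasDerivAt
      (Ici_mem_nhds hy)).deriv

theorem deriv_deriv_lyapunov_of_gt (hx : ε < x) :
    deriv (deriv (lyapunov ε φζ)) x = (φζ x)⁻¹ * lyapunovSlope ε φζ x := by
  rw [(deriv_lyapunov_eventuallyEq_slope hφζcont hφζpos hx).deriv_eq]
  exact ((hasDerivWithinAt_lyapunovSlope hφζcont hφζpos hx.le).hasDerivAt (Ici_mem_nhds hx)).deriv

theorem deriv_deriv_lyapunov_pos (hε : 0 < ε) (hx : ε < x) :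
    0 < deriv (deriv (lyapunov ε φζ)) x := by
  rw [deriv_deriv_lyapunov_of_gt hφζcont hφζpos hx]
  exact mul_pos (inv_pos.2 (hφζpos x hx.le)) (lyapunovSlope_pos hε)

theorem lyapunov_generator_ge_of_gt (hε : 0 < ε) {e z c : ℝ} (hx : ε < x)
    (h : -(c * φζ x) ≤ z) :
    -(c * φζ x * deriv (lyapunov ε φζ) x) ≤
      1 / 2 * e ^ 2 * deriv (deriv (lyapunov ε φζ)) x + z * deriv (lyapunov ε φζ) x := by
  have hslope : 0 < lyapunovSlope ε φζ x := lyapunovSlope_pos hε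
  have hcurv : 0 ≤ 1 / 2 * e ^ 2 * deriv (deriv (lyapunov ε φζ)) x :=
    mul_nonneg (by positivity) (deriv_deriv_lyapunov_pos hφζcont hφζpos hε hx).le
  have hdrift := mul_le_mul_of_nonneg_right h hslope.le
  rw [(deriv_lyapunov_eventuallyEq_slope hφζcont hφζpos hx).eq_of_nhds]
  linarith

end Lyapunov

theorem stmt11_general (T : ℝ)
    (ζ η : ℝ → ℝ → ℝ)
    (ε : ℝ) (hε : 0 < ε)
    (c₀ cζ : ℝ → ℝ)
    (φ₀ : ℝ → ℝ)
    (φζ : ℝ → ℝ) (hφζcont : ContinuousOn φζ (Ici ε))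
    (hφζpos : ∀ v ∈ Ici ε, 0 < φζ v)
    (hV7 : ∀ᵐ t ∂(volume.restrict (Icc 0 T)),
      (∀ v ∈ Ioo (0:ℝ) ε, η t v ^ 2 / (2 * v ^ 2) ≤ ζ t v / v + c₀ t * φ₀ v) ∧
      (∀ v ∈ Ici ε, -(cζ t * φζ v) ≤ ζ t v)) :
    ∃ φ : ℝ → ℝ,
      -- the explicit choice
      (∀ x ∈ Ioo (0:ℝ) ε, φ x = Real.log x) ∧
      (∀ x ∈ Ici ε, φ x = Real.log ε
        + ∫ y in ε..x, (1 / ε) * Real.exp (∫ z in ε..y, (φζ z)⁻¹)) ∧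
      -- (i)
      ContDiffOn ℝ 1 φ (Ioi 0) ∧
      Filter.Tendsto φ (nhdsWithin 0 (Ioi 0)) Filter.atBot ∧
      (∀ x : ℝ, 0 < x → 0 < deriv φ x) ∧
      ContDiffOn ℝ 2 φ (Ioc 0 ε) ∧ ContDiffOn ℝ 2 φ (Ici ε) ∧
      (∀ x : ℝ, ε < x → 0 < deriv (deriv φ) x) ∧
      -- (ii)
      (∀ᵐ t ∂(volume.restrict (Icc 0 T)), ∀ x : ℝ, 0 < x → x ≠ ε →
        (x < ε → -(c₀ t * φ₀ x) ≤
          (1 / 2) * η t x ^ 2 * deriv (deriv φ) x + ζ t x * deriv φ x) ∧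
        (ε < x → -(cζ t * φζ x * deriv φ x) ≤
          (1 / 2) * η t x ^ 2 * deriv (deriv φ) x + ζ t x * deriv φ x)) := by
  refine ⟨lyapunov ε φζ, fun x hx => lyapunov_of_le hx.2.le, fun x hx => lyapunov_of_ge hx,
    contDiffOn_lyapunov_Ioi hφζcont hφζpos, tendsto_lyapunov_atBot hε,
    fun x hx => deriv_lyapunov_pos hφζcont hφζpos hε hx, contDiffOn_lyapunov_Ioc,
    contDiffOn_lyapunov_Ici hφζcont hφζpos,
    fun x hx => deriv_deriv_lyapunov_pos hφζcont hφζpos hε hx, ?_⟩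
  filter_upwards [hV7] with t ht x hx0 _
  exact ⟨fun hlt => lyapunov_generator_ge_of_lt hx0 hlt (ht.1 x ⟨hx0, hlt⟩),
    fun hgt => lyapunov_generator_ge_of_gt hφζcont hφζpos hε hgt (ht.2 x hgt.le)⟩

/-- Lyapunov function for the positivity proof: under (V.7) there is
`φ ∈ C¹((0,∞))` with `φ(0+) = -∞`, `φ' > 0`, `φ` twice continuously differentiable on
`(0,ε]` and `[ε,∞)` with `φ'' > 0` on `(ε,∞)`, such that a.e. in `t`:
`½η(t,x)²φ''(x) + ζ(t,x)φ'(x) ≥ -c₀(t)φ₀(x)` for `x < ε` and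
`≥ -c_ζ(t)φ_ζ(x)φ'(x)` for `x > ε`; explicitly `φ(x) = log x` for `x < ε` and
`φ(x) = log ε + ∫_ε^x (1/ε) exp(∫_ε^y φ_ζ(z)⁻¹ dz) dy` for `x ≥ ε`. -/
theorem stmt11 (T : ℝ) (hT : 0 < T)
    (ζ η : ℝ → ℝ → ℝ)
    (hζmeas : Measurable (uncurry ζ)) (hηmeas : Measurable (uncurry η))
    (ε : ℝ) (hε : 0 < ε)
    (c₀ cζ : ℝ → ℝ)
    (hc₀ : IntegrableOn c₀ (Icc 0 T)) (hc₀0 : ∀ t, 0 ≤ c₀ t)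
    (hcζ : IntegrableOn cζ (Icc 0 T)) (hcζ0 : ∀ t, 0 ≤ cζ t)
    (φ₀ : ℝ → ℝ) (hφ₀mono : MonotoneOn φ₀ (Ioc 0 ε))
    (hφ₀nonneg : ∀ v ∈ Ioc (0:ℝ) ε, 0 ≤ φ₀ v)
    (φζ : ℝ → ℝ) (hφζmono : MonotoneOn φζ (Ici ε)) (hφζcont : ContinuousOn φζ (Ici ε))
    (hφζpos : ∀ v ∈ Ici ε, 0 < φζ v)
    (hV7 : ∀ᵐ t ∂(volume.restrict (Icc 0 T)),
      (∀ v ∈ Ioo (0:ℝ) ε, η t v ^ 2 / (2 * v ^ 2) ≤ ζ t v / v + c₀ t * φ₀ v) ∧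
      (∀ v ∈ Ici ε, -(cζ t * φζ v) ≤ ζ t v)) :
    ∃ φ : ℝ → ℝ,
      -- the explicit choice
      (∀ x ∈ Ioo (0:ℝ) ε, φ x = Real.log x) ∧
      (∀ x ∈ Ici ε, φ x = Real.log ε
        + ∫ y in ε..x, (1 / ε) * Real.exp (∫ z in ε..y, (φζ z)⁻¹)) ∧
      -- (i)
      ContDiffOn ℝ 1 φ (Ioi 0) ∧
      Filter.Tendsto φ (nhdsWithin 0 (Ioi 0)) Filter.atBot ∧
      (∀ x : ℝ, 0 < x → 0 < deriv φ x) ∧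
      ContDiffOn ℝ 2 φ (Ioc 0 ε) ∧ ContDiffOn ℝ 2 φ (Ici ε) ∧
      (∀ x : ℝ, ε < x → 0 < deriv (deriv φ) x) ∧
      -- (ii)
      (∀ᵐ t ∂(volume.restrict (Icc 0 T)), ∀ x : ℝ, 0 < x → x ≠ ε →
        (x < ε → -(c₀ t * φ₀ x) ≤
          (1 / 2) * η t x ^ 2 * deriv (deriv φ) x + ζ t x * deriv φ x) ∧
        (ε < x → -(cζ t * φζ x * deriv φ x) ≤
          (1 / 2) * η t x ^ 2 * deriv (deriv φ) x + ζ t x * deriv φ x)) :=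
  stmt11_general T ζ η ε hε c₀ cζ φ₀ φζ hφζcont hφζpos hV7
end

section
/- Let $n \in \mathbb{N}$, $\alpha_1,\dots,\alpha_n \geq 1$, $\beta_1,\dots,\beta_n \geq 1/2$, $\gamma := \min_i \beta_i$, and suppose $\zeta(t,v) = k(t) + \sum_{i=1}^n l_i(t) v^{\alpha_i}$ with $k \geq 0$ integrable and $l_i$ integrable, and $\eta(t,v) = \sum_{i=1}^n \lambda_i(t) v^{\beta_i}$ with $\lambda_i$ square-integrable, for $v > 0$. Set $c_\eta := \sum_{i=1}^n |\lambda_i|$. If $c_\eta^2/2 \leq k$ when $\gamma = 1/2$, or $c_\eta^2 \delta \leq k$ for some $\delta > 0$ when $\gamma \in (1/2,1)$, then there exist $\varepsilon \in (0,1)$, $c_0 \in L^1(\mathbb{R}_+)$ and an increasing $\varphi_0: (0,\varepsilon] \to \mathbb{R}_+$ such that $\frac{\eta(t,v)^2}{2v^2} \leq \frac{\zeta(t,v)}{v} + c_0(t)\varphi_0(v)$ for all $t \in [0,T]$ and $v \in (0,\varepsilon)$. -/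
open MeasureTheory Set Function
open scoped ENNReal

/-- sums of power functions satisfy the positivity condition: for
`ζ(t,v) = k(t) + Σᵢ lᵢ(t) v^{αᵢ}` and `η(t,v) = Σᵢ λᵢ(t) v^{βᵢ}` with `αᵢ ≥ 1`,
`βᵢ ≥ 1/2`, `γ = minᵢ βᵢ`, `c_η = Σᵢ |λᵢ|`, and `c_η²/2 ≤ k` when `γ = 1/2`
(resp. `c_η² δ ≤ k` for some `δ > 0` when `γ ∈ (1/2,1)`), there exist `ε ∈ (0,1)`,
integrable `c₀ ≥ 0` and increasing `φ₀ : (0,ε] → ℝ₊` with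
`η(t,v)²/(2v²) ≤ ζ(t,v)/v + c₀(t) φ₀(v)` for all `t ∈ [0,T]` and `v ∈ (0,ε)`. -/
theorem stmt12 (T : ℝ) (hT : 0 < T) (n : ℕ) (hn : 0 < n)
    (α β : Fin n → ℝ) (hα : ∀ i, 1 ≤ α i) (hβ : ∀ i, (1:ℝ)/2 ≤ β i)
    (γ : ℝ) (hγ : IsLeast (Set.range β) γ)
    (k : ℝ → ℝ) (hk : IntegrableOn k (Icc 0 T)) (hk0 : ∀ t, 0 ≤ k t)
    (l lam : Fin n → ℝ → ℝ)
    (hl : ∀ i, IntegrableOn (l i) (Icc 0 T))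
    (hlam : ∀ i, IntegrableOn (fun t => lam i t ^ 2) (Icc 0 T))
    (ζ η : ℝ → ℝ → ℝ)
    (hζ : ∀ t, ∀ v > (0:ℝ), ζ t v = k t + ∑ i, l i t * v ^ (α i))
    (hη : ∀ t, ∀ v > (0:ℝ), η t v = ∑ i, lam i t * v ^ (β i))
    (cη : ℝ → ℝ) (hcη : ∀ t, cη t = ∑ i, |lam i t|)
    (hhalf : γ = 1/2 → ∀ t ∈ Icc (0:ℝ) T, cη t ^ 2 / 2 ≤ k t)
    (hmid : 1/2 < γ → γ < 1 → ∃ δ > (0:ℝ), ∀ t ∈ Icc (0:ℝ) T, cη t ^ 2 * δ ≤ k t) :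
    ∃ ε ∈ Ioo (0:ℝ) 1, ∃ c₀ : ℝ → ℝ,
      IntegrableOn c₀ (Icc 0 T) ∧ (∀ t, 0 ≤ c₀ t) ∧
      ∃ φ₀ : ℝ → ℝ, MonotoneOn φ₀ (Ioc 0 ε) ∧ (∀ v ∈ Ioc (0:ℝ) ε, 0 ≤ φ₀ v) ∧
        ∀ t ∈ Icc (0:ℝ) T, ∀ v ∈ Ioo (0:ℝ) ε,
          η t v ^ 2 / (2 * v ^ 2) ≤ ζ t v / v + c₀ t * φ₀ v := by
  obtain ⟨⟨i₀, hi₀⟩, hlb⟩ := hγ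
  have hγhalf : (1:ℝ)/2 ≤ γ := hi₀ ▸ hβ i₀
  have hγle : ∀ i, γ ≤ β i := fun i => hlb ⟨i, rfl⟩
  -- reduce to the key inequality
  suffices h : ∃ ε ∈ Ioo (0:ℝ) 1, ∀ t ∈ Icc (0:ℝ) T, ∀ v ∈ Ioo (0:ℝ) ε,
      cη t ^ 2 * v ^ (2*γ-2) / 2 ≤ k t / v + cη t ^ 2 / 2 by
    obtain ⟨ε, hε, hkey⟩ := h
    refine ⟨ε, hε, fun t => (∑ i, |l i t|) + cη t ^ 2 / 2, ?_, ?_, fun _ => 1, ?_, ?_, ?_⟩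
    · -- integrability
      have hsum : IntegrableOn (fun t => ∑ i, |l i t|) (Icc (0:ℝ) T) :=
        integrable_finset_sum _ fun i _ => (hl i).abs
      have hcηm : AEMeasurable cη ((volume : Measure ℝ).restrict (Icc 0 T)) := by
        have : AEMeasurable (fun t => ∑ i, |lam i t|)
            ((volume : Measure ℝ).restrict (Icc 0 T)) := by
          refine Finset.aemeasurable_fun_sum _ fun i _ => ?_
          have h1 : AEMeasurable (fun t => lam i t ^ 2)
              ((volume : Measure ℝ).restrict (Icc 0 T)) := (hlam i).aemeasurable
          have h2 : AEMeasurable (fun t => Real.sqrt (lam i t ^ 2))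
              ((volume : Measure ℝ).restrict (Icc 0 T)) :=
            Real.continuous_sqrt.measurable.comp_aemeasurable h1
          simpa [Real.sqrt_sq_eq_abs] using h2
        rw [show cη = fun t => ∑ i, |lam i t| from funext hcη]
        exact this
      have hcη2 : IntegrableOn (fun t => cη t ^ 2 / 2) (Icc (0:ℝ) T) := by
        refine Integrable.mono' (g := fun t => (n:ℝ) * ∑ i, lam i t ^ 2)
          ((integrable_finset_sum _ fun i _ => hlam i).const_mul _)
          ((hcηm.pow_const 2).div_const 2).aestronglyMeasurable
          (Filter.Eventually.of_forall fun t => ?_)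
        have h0 : (0:ℝ) ≤ cη t := by
          rw [hcη]; exact Finset.sum_nonneg fun i _ => abs_nonneg _
        have hcs : cη t ^ 2 ≤ (n:ℝ) * ∑ i, lam i t ^ 2 := by
          rw [hcη]
          calc (∑ i, |lam i t|) ^ 2 ≤ (Finset.univ.card : ℝ) * ∑ i, |lam i t| ^ 2 :=
                sq_sum_le_card_mul_sum_sq
            _ = (n:ℝ) * ∑ i, lam i t ^ 2 := by simp [sq_abs]
        rw [Real.norm_eq_abs, abs_of_nonneg (by positivity)]
        nlinarith
      exact hsum.add hcη2
    · intro t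
      have : (0:ℝ) ≤ ∑ i, |l i t| := Finset.sum_nonneg fun i _ => abs_nonneg _
      positivity
    · exact monotoneOn_const
    · intro v _; norm_num
    · intro t ht v hv
      have hv0 : (0:ℝ) < v := hv.1
      have hv1 : v < 1 := hv.2.trans hε.2
      rw [hζ t v hv0, hη t v hv0]
      have hηbd : |∑ i, lam i t * v ^ (β i)| ≤ cη t * v ^ γ := by
        calc |∑ i, lam i t * v ^ (β i)| ≤ ∑ i, |lam i t * v ^ (β i)| :=
              Finset.abs_sum_le_sum_abs _ _
          _ ≤ ∑ i, |lam i t| * v ^ γ := by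
              refine Finset.sum_le_sum fun i _ => ?_
              rw [abs_mul, abs_of_nonneg (Real.rpow_nonneg hv0.le _)]
              exact mul_le_mul_of_nonneg_left
                (Real.rpow_le_rpow_of_exponent_ge hv0 hv1.le (hγle i)) (abs_nonneg _)
          _ = cη t * v ^ γ := by rw [← Finset.sum_mul, hcη]
      have hstep1 : (∑ i, lam i t * v ^ (β i)) ^ 2 / (2 * v ^ 2)
          ≤ cη t ^ 2 * v ^ (2*γ-2) / 2 := by
        have hsq : (∑ i, lam i t * v ^ (β i)) ^ 2 ≤ (cη t * v ^ γ) ^ 2 := by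
          rw [← sq_abs (∑ i, lam i t * v ^ (β i))]
          exact pow_le_pow_left₀ (abs_nonneg _) hηbd 2
        have hrw : cη t ^ 2 * v ^ (2*γ-2) / 2 = (cη t * v ^ γ) ^ 2 / (2 * v ^ 2) := by
          have hvv : v ^ (2*γ-2 : ℝ) = v ^ (2*γ : ℝ) / v ^ (2:ℕ) := by
            rw [← Real.rpow_natCast v 2, ← Real.rpow_sub hv0]
            norm_num
          have hg2 : (v ^ γ) ^ (2:ℕ) = v ^ (2*γ : ℝ) := by
            rw [← Real.rpow_natCast (v ^ γ) 2, ← Real.rpow_mul hv0.le]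
            ring_nf
          rw [mul_pow, hg2, hvv]
          ring
        rw [hrw]
        exact div_le_div_of_nonneg_right hsq (by positivity)
      refine hstep1.trans ((hkey t ht v hv).trans ?_)
      have hlbd : ∀ i ∈ Finset.univ, -|l i t| ≤ l i t * v ^ (α i) / v := by
        intro i _
        have h1 : l i t * v ^ (α i) / v = l i t * v ^ (α i - 1) := by
          rw [Real.rpow_sub hv0, Real.rpow_one]; ring
        rw [h1]
        have h2 : v ^ (α i - 1) ≤ 1 :=
          Real.rpow_le_one hv0.le hv1.le (by linarith [hα i])
        have h3 : |l i t * v ^ (α i - 1)| ≤ |l i t| := by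
          rw [abs_mul, abs_of_nonneg (Real.rpow_nonneg hv0.le _)]
          nlinarith [abs_nonneg (l i t)]
        linarith [neg_abs_le (l i t * v ^ (α i - 1))]
      have hsum2 : -(∑ i, |l i t|) ≤ ∑ i, l i t * v ^ (α i) / v := by
        rw [← Finset.sum_neg_distrib]
        exact Finset.sum_le_sum hlbd
      have : (k t + ∑ i, l i t * v ^ (α i)) / v
          = k t / v + ∑ i, l i t * v ^ (α i) / v := by
        rw [add_div, Finset.sum_div]
      rw [this, mul_one]
      linarith
  -- now establish the key inequality, by cases on γ
  rcases eq_or_lt_of_le hγhalf with hhalf' | hγgt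
  · -- γ = 1/2
    refine ⟨1/2, by norm_num, fun t ht v hv => ?_⟩
    have hv0 := hv.1
    have h1 : v ^ (2*γ-2 : ℝ) = 1 / v := by
      rw [← hhalf', show (2 * (1/2 : ℝ) - 2) = -1 by norm_num, Real.rpow_neg_one, one_div]
    have h2 := hhalf hhalf'.symm t ht
    have h3 : cη t ^ 2 * (1/v) / 2 ≤ k t / v := by
      have e : cη t ^ 2 * (1/v) / 2 = (cη t ^ 2 / 2) / v := by ring
      rw [e]
      gcongr
    rw [h1]
    linarith [sq_nonneg (cη t)]
  · rcases lt_or_ge γ 1 with hγ1 | hγ1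
    · -- 1/2 < γ < 1
      obtain ⟨δ, hδ0, hδ⟩ := hmid hγgt hγ1
      set ε := min (1/2 : ℝ) ((2*δ) ^ (1/(2*γ-1)) : ℝ) with hεdef
      have hexp : (0:ℝ) < 2*γ-1 := by linarith
      have hpos : (0:ℝ) < (2*δ) ^ (1/(2*γ-1) : ℝ) := Real.rpow_pos_of_pos (by linarith) _
      refine ⟨ε, ⟨lt_min (by norm_num) hpos, lt_of_le_of_lt (min_le_left _ _) (by norm_num)⟩,
        fun t ht v hv => ?_⟩
      have hv0 : (0:ℝ) < v := hv.1
      have hvlt : v < (2*δ) ^ (1/(2*γ-1) : ℝ) := lt_of_lt_of_le hv.2 (min_le_right _ _)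
      have hv2δ : v ^ (2*γ-1 : ℝ) ≤ 2*δ := by
        have := Real.rpow_lt_rpow hv0.le hvlt hexp
        rw [← Real.rpow_mul (by linarith : (0:ℝ) ≤ 2*δ)] at this
        rw [one_div_mul_cancel (ne_of_gt hexp), Real.rpow_one] at this
        exact this.le
      have h1 : v ^ (2*γ-2 : ℝ) = v ^ (2*γ-1 : ℝ) / v := by
        rw [show (2*γ-2 : ℝ) = (2*γ-1) - 1 by ring, Real.rpow_sub hv0, Real.rpow_one]
      have h2 := hδ t ht
      have h3 : cη t ^ 2 * v ^ (2*γ-2 : ℝ) / 2 ≤ k t / v := by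
        rw [h1]
        have e : cη t ^ 2 * (v ^ (2*γ-1 : ℝ) / v) / 2
            = (cη t ^ 2 * v ^ (2*γ-1 : ℝ) / 2) / v := by ring
        rw [e]
        have hmul : cη t ^ 2 * v ^ (2*γ-1 : ℝ) ≤ cη t ^ 2 * (2*δ) :=
          mul_le_mul_of_nonneg_left hv2δ (sq_nonneg _)
        have h4 : cη t ^ 2 * v ^ (2*γ-1 : ℝ) / 2 ≤ k t := by linarith
        gcongr
      linarith [sq_nonneg (cη t)]
    · -- γ ≥ 1
      refine ⟨1/2, by norm_num, fun t ht v hv => ?_⟩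
      have hv0 : (0:ℝ) < v := hv.1
      have hv1 : v ≤ 1 := by linarith [hv.2]
      have h1 : v ^ (2*γ-2 : ℝ) ≤ 1 := Real.rpow_le_one hv0.le hv1 (by linarith)
      have h2 : (0:ℝ) ≤ k t / v := div_nonneg (hk0 t) hv0.le
      nlinarith [sq_nonneg (cη t)]
end
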